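/- Let q ≥ 3 and let n, d, w be integers with 2 ≤ d < w < n. If there exists an (n,d,w)_q MOA-CW code, then there exists an (n−1, d, w)_q MOA-CW code, and there also exists an (n−1, d−1, w−1)_q MOA-CW code. -/

import Mathlib

/-- The weight of a word `x : Fin n → Fin q`: the number of nonzero coordinates. -/
def wt {n q : ℕ} (x : Fin n → Fin q) : ℕ :=
  (Finset.univ.filter fun i => (x i : ℕ) ≠ 0).card

/-- The support of a word `x : Fin n → Fin q`: the set of nonzero coordinates. -/
def supp {n q : ℕ} (x : Fin n → Fin q) : Finset (Fin n) :=
  Finset.univ.filter fun i => (x i : ℕ) ≠ 0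

/-- `C` is an `(n,d,w)_q` MOA-CW code: a constant-weight code of length `n` and
weight `w` over `Fin q` with minimum Hamming distance `d` such that for every
`w`-element subset `S` of `Fin n`, every `(w-d+1)`-element subset `T` of `S`,
and every assignment of nonzero values to the coordinates of `T`, there is
exactly one codeword with support `S` agreeing with that assignment on `T`. -/
def IsMOACW (n d w q : ℕ) (C : Finset (Fin n → Fin q)) : Prop :=
  (∀ c ∈ C, wt c = w) ∧
  (∀ c₁ ∈ C, ∀ c₂ ∈ C, c₁ ≠ c₂ → d ≤ hammingDist c₁ c₂) ∧
  (∀ S : Finset (Fin n), S.card = w → ∀ T ⊆ S, T.card = w - d + 1 →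
    ∀ a : Fin n → Fin q, (∀ i ∈ T, (a i : ℕ) ≠ 0) →
      ∃! c, c ∈ C ∧ supp c = S ∧ ∀ i ∈ T, c i = a i)

/-!
Delete the first coordinate. The codewords vanishing there give an `(n-1, d, w)` code and those
nonzero there an `(n-1, d-1, w-1)` code: a support `S` of the shorter words corresponds to the
support `S + 1` (resp. `{0} ∪ (S + 1)`) of the original ones, so the unique-completion property transfers
with the same strength `w - d + 1`, and deleting one coordinate lowers distances by at most one,
by nothing when both words vanish there.
-/

section

variable {m q : ℕ}

def consSupp (p : Prop) [Decidable p] (S : Finset (Fin m)) : Finset (Fin (m + 1)) :=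
  if p then insert 0 (S.map (Fin.succEmb m)) else S.map (Fin.succEmb m)

section consSupp

variable {p : Prop} [Decidable p] {S : Finset (Fin m)}

@[simp]
lemma zero_mem_consSupp : 0 ∈ consSupp p S ↔ p := by
  unfold consSupp; split_ifs <;> simp [*]

@[simp]
lemma succ_mem_consSupp {j : Fin m} : j.succ ∈ consSupp p S ↔ j ∈ S := by
  unfold consSupp; split_ifs <;> simp

lemma card_consSupp : (consSupp p S).card = S.card + if p then 1 else 0 := by
  unfold consSupp; split_ifs <;> simp

lemma map_succEmb_subset_consSupp : S.map (Fin.succEmb m) ⊆ consSupp p S := by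
  unfold consSupp; split_ifs <;> simp

lemma consSupp_inj {p' : Prop} [Decidable p'] {S' : Finset (Fin m)} :
    consSupp p S = consSupp p' S' ↔ (p ↔ p') ∧ S = S' := by
  refine ⟨fun h => ⟨?_, ?_⟩, fun ⟨hp, hS⟩ => ?_⟩
  · simpa using congrArg (0 ∈ ·) h
  · ext j; simpa using congrArg (j.succ ∈ ·) h
  · ext i; cases i using Fin.cases <;> simp [hp, hS]

end consSupp

@[simp]
lemma mem_supp {n : ℕ} {x : Fin n → Fin q} {i : Fin n} : i ∈ supp x ↔ (x i : ℕ) ≠ 0 := by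
  simp [supp]

lemma supp_eq_consSupp (c : Fin (m + 1) → Fin q) :
    supp c = consSupp ((c 0 : ℕ) ≠ 0) (supp (Fin.tail c)) := by
  ext i; cases i using Fin.cases <;> simp [Fin.tail]

lemma supp_eq_consSupp_iff {p : Prop} [Decidable p] {c : Fin (m + 1) → Fin q}
    {S : Finset (Fin m)} :
    supp c = consSupp p S ↔ ((c 0 : ℕ) ≠ 0 ↔ p) ∧ supp (Fin.tail c) = S := by
  rw [supp_eq_consSupp, consSupp_inj]

lemma wt_eq_wt_tail_add (c : Fin (m + 1) → Fin q) :
    wt c = wt (Fin.tail c) + if (c 0 : ℕ) ≠ 0 then 1 else 0 :=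
  (congrArg Finset.card (supp_eq_consSupp c)).trans card_consSupp

lemma hammingDist_eq_add_hammingDist_tail (c₁ c₂ : Fin (m + 1) → Fin q) :
    hammingDist c₁ c₂ = (if c₁ 0 ≠ c₂ 0 then 1 else 0) + hammingDist (Fin.tail c₁) (Fin.tail c₂) :=
  Fin.card_filter_univ_succ' _

/-- `p = False` gives the shortened code, `p = True` the punctured code of weight one less. -/
def derivedCode (p : Prop) [Decidable p] (C : Finset (Fin (m + 1) → Fin q)) :
    Finset (Fin m → Fin q) :=
  (C.filter fun c => ((c 0 : ℕ) ≠ 0 ↔ p)).image Fin.tail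

/-- The third clause of `IsMOACW`, with `t = w - d + 1`. -/
def IsMOA (w t : ℕ) (C : Finset (Fin m → Fin q)) : Prop :=
  ∀ S : Finset (Fin m), S.card = w → ∀ T ⊆ S, T.card = t →
    ∀ a : Fin m → Fin q, (∀ i ∈ T, (a i : ℕ) ≠ 0) →
      ∃! c, c ∈ C ∧ supp c = S ∧ ∀ i ∈ T, c i = a i

variable (p : Prop) [Decidable p] {C : Finset (Fin (m + 1) → Fin q)}

lemma wt_of_mem_derivedCode {w : ℕ} (hC : ∀ c ∈ C, wt c = w + if p then 1 else 0)
    {x : Fin m → Fin q} (hx : x ∈ derivedCode p C) : wt x = w := by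
  obtain ⟨c, hc, rfl⟩ := Finset.mem_image.1 hx
  obtain ⟨hcC, hcp⟩ := Finset.mem_filter.1 hc
  have := wt_eq_wt_tail_add c
  rw [hC c hcC, if_congr hcp rfl rfl] at this
  omega

lemma le_hammingDist_of_mem_derivedCode {d : ℕ}
    (hC : ∀ c₁ ∈ C, ∀ c₂ ∈ C, c₁ ≠ c₂ → d + (if p then 1 else 0) ≤ hammingDist c₁ c₂)
    {x₁ x₂ : Fin m → Fin q} (hx₁ : x₁ ∈ derivedCode p C) (hx₂ : x₂ ∈ derivedCode p C)
    (hne : x₁ ≠ x₂) : d ≤ hammingDist x₁ x₂ := by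
  obtain ⟨c₁, hc₁, rfl⟩ := Finset.mem_image.1 hx₁
  obtain ⟨c₂, hc₂, rfl⟩ := Finset.mem_image.1 hx₂
  obtain ⟨hc₁C, hc₁p⟩ := Finset.mem_filter.1 hc₁
  obtain ⟨hc₂C, hc₂p⟩ := Finset.mem_filter.1 hc₂
  have hdist := hC c₁ hc₁C c₂ hc₂C (fun h => hne (h ▸ rfl))
  -- when `p` fails, both codewords vanish at `0`, so deleting it costs no distance
  have hhead : (if c₁ 0 ≠ c₂ 0 then 1 else 0) ≤ if p then 1 else 0 := by
    by_cases hp : p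
    · simp only [hp, if_true]; split <;> omega
    · have : c₁ 0 = c₂ 0 := Fin.ext (by simp only [hp, iff_false, not_not] at hc₁p hc₂p; omega)
      simp [this]
  rw [hammingDist_eq_add_hammingDist_tail] at hdist
  omega

lemma isMOA_derivedCode [NeZero q] {w t : ℕ} (hC : IsMOA (w + if p then 1 else 0) t C) :
    IsMOA w t (derivedCode p C) := by
  intro S hS T hTS hT a ha
  obtain ⟨c, ⟨hcC, hcS, hcT⟩, huniq⟩ := hC (consSupp p S) (by rw [card_consSupp, hS])
    (T.map (Fin.succEmb m)) ((Finset.map_subset_map.2 hTS).trans map_succEmb_subset_consSupp)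
    (by rw [Finset.card_map, hT]) (Fin.cons 0 a) (by simpa using ha)
  obtain ⟨hcp, hcS'⟩ := supp_eq_consSupp_iff.1 hcS
  refine ⟨Fin.tail c, ⟨Finset.mem_image_of_mem _ (Finset.mem_filter.2 ⟨hcC, hcp⟩), hcS', ?_⟩, ?_⟩
  · simpa [Fin.tail] using hcT
  · rintro _ ⟨hx, hxS, hxT⟩
    obtain ⟨c', hc', rfl⟩ := Finset.mem_image.1 hx
    obtain ⟨hc'C, hc'p⟩ := Finset.mem_filter.1 hc'
    rw [huniq c' ⟨hc'C, supp_eq_consSupp_iff.2 ⟨hc'p, hxS⟩, by simpa [Fin.tail] using hxT⟩]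

theorem IsMOACW.derivedCode [NeZero q] {d w : ℕ}
    (hC : IsMOACW (m + 1) (d + if p then 1 else 0) (w + if p then 1 else 0) q C) :
    IsMOACW m d w q (derivedCode p C) := by
  obtain ⟨hwt, hdist, hOA⟩ := hC
  rw [Nat.add_sub_add_right] at hOA
  exact ⟨fun _ => wt_of_mem_derivedCode p hwt,
    fun _ hx₁ _ hx₂ => le_hammingDist_of_mem_derivedCode p hdist hx₁ hx₂,
    isMOA_derivedCode p hOA⟩

end

/-- From an `(n,d,w)_q` MOA-CW code one obtains an `(n-1,d,w)_q` MOA-CW code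
and an `(n-1,d-1,w-1)_q` MOA-CW code. -/
theorem moacw_derived (n d w q : ℕ) (hq : 3 ≤ q) (hd : 2 ≤ d) (hdw : d < w)
    (hw : w < n) (h : ∃ C : Finset (Fin n → Fin q), IsMOACW n d w q C) :
    (∃ C₁ : Finset (Fin (n - 1) → Fin q), IsMOACW (n - 1) d w q C₁) ∧
    (∃ C₂ : Finset (Fin (n - 1) → Fin q), IsMOACW (n - 1) (d - 1) (w - 1) q C₂) := by
  obtain ⟨C, hC⟩ := h
  obtain ⟨m, rfl⟩ : ∃ m, n = m + 1 := ⟨n - 1, by omega⟩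
  obtain ⟨d, rfl⟩ : ∃ d', d = d' + 1 := ⟨d - 1, by omega⟩
  obtain ⟨w, rfl⟩ : ∃ w', w = w' + 1 := ⟨w - 1, by omega⟩
  have : NeZero q := ⟨by omega⟩
  exact ⟨⟨derivedCode False C, IsMOACW.derivedCode False (by simpa using hC)⟩,
    ⟨derivedCode True C, IsMOACW.derivedCode True (by simpa using hC)⟩⟩
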